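/- arXiv:1409.2536 — 3 statements merged into one kernel-verified Lean document; each statement's English description precedes it below -/
import Mathlib

section
/- For every probability distribution P on a finite set X with |X| = a, every positive integer n and every δ > 0, the cardinality of the variance-typical set satisfies |T^n_{P,δ}| ≤ exp₂(nH(P) + K·a·δ·√n) and |T^n_{P,δ}| ≥ (1 − a/δ²)·exp₂(nH(P) − K·a·δ·√n), where K = 2 log₂(e)/e, H(P) = −Σ_x P(x) log₂ P(x), and exp₂ denotes the exponential to base 2. -/
open Matrix BigOperators Finset
open scoped Classical ComplexOrder

noncomputable section

/-- Square complex matrices of size `d` (operators on `ℂ^d`). -/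
abbrev Mat (d : ℕ) := Matrix (Fin d) (Fin d) ℂ

/-- Operators on the `n`-fold tensor power `(ℂ^d)^{⊗n}`, indexed by `Fin n → Fin d`. -/
abbrev MatPow (d n : ℕ) := Matrix (Fin n → Fin d) (Fin n → Fin d) ℂ

/-- Tensor product `A 0 ⊗ A 1 ⊗ ⋯ ⊗ A (n-1)` of a family of `d × d` matrices. -/
def tensorPow {d n : ℕ} (A : Fin n → Mat d) : MatPow d n :=
  Matrix.of fun j k => ∏ i, A i (j i) (k i)

/-- Exponential to base 2. -/
def exp2 (t : ℝ) : ℝ := (2 : ℝ) ^ t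

/-- `P` is a probability distribution on the finite set `X`. -/
def IsProbDist {X : Type*} [Fintype X] (P : X → ℝ) : Prop :=
  (∀ x, 0 ≤ P x) ∧ ∑ x, P x = 1

/-- `ρ` is a density operator (a state): positive semidefinite with trace one. -/
def IsState {ι : Type*} [Fintype ι] [DecidableEq ι] (ρ : Matrix ι ι ℂ) : Prop :=
  ρ.PosSemidef ∧ ρ.trace = 1

/-- `N(x|x^n)`: number of occurrences of the letter `x` in the sequence `xs`. -/
def countIn {X : Type*} {n : ℕ} (x : X) (xs : Fin n → X) : ℕ :=
  (Finset.univ.filter fun i => xs i = x).card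

/-- The variance-typical set `T^n_{P,δ}`. -/
def typicalSet {X : Type*} [Fintype X] (n : ℕ) (P : X → ℝ) (δ : ℝ) :
    Finset (Fin n → X) :=
  Finset.univ.filter fun xs => ∀ x : X,
    |(countIn x xs : ℝ) - n * P x| ≤ δ * Real.sqrt n * Real.sqrt (P x * (1 - P x))

/-- Product (i.i.d.) probability `P^{⊗n}(A)` of a set `A` of sequences. -/
def prodProb {X : Type*} [Fintype X] {n : ℕ} (P : X → ℝ) (A : Finset (Fin n → X)) : ℝ :=
  ∑ xs ∈ A, ∏ i, P (xs i)

/-- Shannon entropy to base 2. -/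
def shannonEntropy {X : Type*} [Fintype X] (P : X → ℝ) : ℝ :=
  -∑ x, P x * Real.logb 2 (P x)

/-- von Neumann entropy to base 2, `H(ρ) = -Tr(ρ log₂ ρ)`, via the eigenvalues. -/
def vnEntropy {d : ℕ} (ρ : Mat d) : ℝ :=
  if h : ρ.IsHermitian then -∑ i, h.eigenvalues i * Real.logb 2 (h.eigenvalues i) else 0

/-- The constant `K = 2 log₂(e) / e`. -/
def Kconst : ℝ := 2 * Real.logb 2 (Real.exp 1) / Real.exp 1

/-- A diagonalization `ρ = Σ_j R j • π j` into one-dimensional mutually orthogonal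
eigenprojectors, with eigenvalue list `R` a probability distribution. -/
def IsDiagonalization {d : ℕ} (ρ : Mat d) (R : Fin d → ℝ) (π : Fin d → Mat d) : Prop :=
  (∀ j, (π j).PosSemidef) ∧ (∀ j, π j * π j = π j) ∧ (∀ j, (π j).trace = 1) ∧
    (∀ j k, j ≠ k → π j * π k = 0) ∧ (∑ j, π j = 1) ∧
    ρ = ∑ j, (R j : ℂ) • π j ∧ IsProbDist R

/-- The variance-typical projector `Π^n_{ρ,δ}` of a state with fixed diagonalization
`(R, π)`. -/
def typicalProj {d : ℕ} (n : ℕ) (R : Fin d → ℝ) (π : Fin d → Mat d) (δ : ℝ) : MatPow d n :=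
  ∑ js ∈ typicalSet n R δ, tensorPow fun i => π (js i)

/-- `B` is an `η`-shadow of the state `σ`: `0 ≤ B ≤ 1` and `Tr(σB) ≥ η`. -/
def IsShadow {ι : Type*} [Fintype ι] [DecidableEq ι] (σ B : Matrix ι ι ℂ) (η : ℝ) : Prop :=
  B.PosSemidef ∧ ((1 : Matrix ι ι ℂ) - B).PosSemidef ∧ η ≤ (Matrix.trace (σ * B)).re

/-- Average state `PW = Σ_x P(x) W_x` of a cq-channel under input distribution `P`. -/
def avgState {X : Type*} [Fintype X] {d : ℕ} (P : X → ℝ) (W : X → Mat d) : Mat d :=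
  ∑ x, (P x : ℂ) • W x

/-- Conditional von Neumann entropy `H(W|P) = Σ_x P(x) H(W_x)`. -/
def condEntropy {X : Type*} [Fintype X] {d : ℕ} (P : X → ℝ) (W : X → Mat d) : ℝ :=
  ∑ x, P x * vnEntropy (W x)

/-- Mutual information `I(P;W) = H(PW) − H(W|P)`. -/
def mutualInfo {X : Type*} [Fintype X] {d : ℕ} (P : X → ℝ) (W : X → Mat d) : ℝ :=
  vnEntropy (avgState P W) - condEntropy P W

/-- Capacity `C(W) = max_P I(P;W)`. -/
def capacity {X : Type*} [Fintype X] {d : ℕ} (W : X → Mat d) : ℝ :=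
  sSup {c | ∃ P : X → ℝ, IsProbDist P ∧ c = mutualInfo P W}

/-- `(f, D)` (with message set `M` inside the outcome index set `M'`) is an
`(n,λ)`-code for the cq-channel `W`: the `D m` are positive semidefinite, sum to the
identity, and each message is decoded correctly with probability at least `1 - λ`. -/
def IsCode {X : Type*} [Fintype X] {d n : ℕ} (W : X → Mat d) (lam : ℝ)
    {M' : Type*} [Fintype M'] (M : Finset M') (f : M' → Fin n → X)
    (D : M' → MatPow d n) : Prop :=
  (∀ m, (D m).PosSemidef) ∧ (∑ m, D m = 1) ∧
    ∀ m ∈ M, 1 - lam ≤ (Matrix.trace (tensorPow (fun i => W (f m i)) * D m)).re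

/-- `N(n,λ)`: maximal size of an `(n,λ)`-code for `W`. -/
def maxCodeSize {X : Type*} [Fintype X] (d : ℕ) (W : X → Mat d) (n : ℕ) (lam : ℝ) : ℕ :=
  sSup {k | ∃ (M' : Type) (_ : Fintype M') (M : Finset M') (f : M' → Fin n → X)
    (D : M' → MatPow d n), IsCode W lam M f D ∧ M.card = k}

/-- Trace norm `‖A‖₁ = Tr|A|`: the sum of the singular values. -/
def traceNorm {ι : Type*} [Fintype ι] [DecidableEq ι] (A : Matrix ι ι ℂ) : ℝ :=
  ∑ i, Real.sqrt ((Matrix.posSemidef_conjTranspose_mul_self A).1.eigenvalues i)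

/-- Trace distance `D(ρ,σ) = ½‖ρ−σ‖₁`. -/
def traceDist {ι : Type*} [Fintype ι] [DecidableEq ι] (ρ σ : Matrix ι ι ℂ) : ℝ :=
  traceNorm (ρ - σ) / 2

/-- (Pure-state) fidelity `F(ρ,σ) = Tr(ρσ)`. -/
def fidelity {ι : Type*} [Fintype ι] [DecidableEq ι] (ρ σ : Matrix ι ι ℂ) : ℝ :=
  (Matrix.trace (ρ * σ)).re

/-- A pure state: the rank-one orthogonal projector `|ψ⟩⟨ψ|` onto the span of a
unit vector `ψ`. -/
def IsPureState {ι : Type*} [Fintype ι] (ρ : Matrix ι ι ℂ) : Prop :=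
  ∃ ψ : ι → ℂ, (∑ i, star (ψ i) * ψ i) = 1 ∧ ρ = Matrix.vecMulVec ψ (star ψ)

/-- The set of eigenvalue-index sequences `js` that are variance-typical, with
constant `δ`, for the distribution `q x` on each block `I_x = {i : xs i = x}`. -/
def condTypicalSet {X : Type*} [Fintype X] {n d : ℕ} (xs : Fin n → X)
    (q : X → Fin d → ℝ) (δ : ℝ) : Finset (Fin n → Fin d) :=
  Finset.univ.filter fun js => ∀ (x : X) (k : Fin d),
    |((Finset.univ.filter fun i => xs i = x ∧ js i = k).card : ℝ) - (countIn x xs : ℝ) * q x k|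
      ≤ δ * Real.sqrt (countIn x xs) * Real.sqrt (q x k * (1 - q x k))

/-- Conditional variance-typical projector `Π^n_{W,δ}(x^n) = ⊗_{x∈X} Π^{I_x}_{W_x,δ}`,
with respect to fixed diagonalizations `W_x = Σ_j (q x j) • (π x j)`. -/
def condTypicalProj {X : Type*} [Fintype X] {d : ℕ} {n : ℕ} (xs : Fin n → X)
    (q : X → Fin d → ℝ) (π : X → Fin d → Mat d) (δ : ℝ) : MatPow d n :=
  ∑ js ∈ condTypicalSet xs q δ, tensorPow fun i => π (xs i) (js i)

/-! A sequence `xs` has probability `∏ⱼ P (xs j) = 2 ^ ∑ₓ N(x|xs) log₂ P(x)`. On the typical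
set the exponent differs from `-nH(P)` by at most `∑ₓ δ√n √(P(x)(1-P(x))) |log₂ P(x)| ≤ Kaδ√n`,
because `√(p(1-p)) |log₂ p| ≤ √p log₂(1/p) ≤ 2 log₂(e)/e`. So every typical sequence has
probability within a factor `2^{±Kaδ√n}` of `2^{-nH(P)}`. Comparing with the total mass `1`
gives the upper bound; for the lower bound, `N(x|·)` has variance `nP(x)(1-P(x))` under `P^n`,
so Chebyshev's inequality and a union bound over the `a` letters give
`P^n(T^n_{P,δ}) ≥ 1 - a/δ²`. -/

section ProductWeights

variable {ι X : Type*} [Fintype ι] [DecidableEq ι] [Fintype X] {P : X → ℝ}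

theorem sum_prod_mul_prod (P : X → ℝ) (f : ι → X → ℝ) :
    ∑ xs : ι → X, (∏ j, P (xs j)) * ∏ j, f j (xs j) = ∏ j, ∑ y, P y * f j y := by
  simp_rw [← prod_mul_distrib]
  exact (Fintype.prod_sum (fun j y => P y * f j y)).symm

theorem sum_prod_eq_one (hP : ∑ y, P y = 1) : ∑ xs : ι → X, ∏ j, P (xs j) = 1 := by
  simpa [hP] using sum_prod_mul_prod (ι := ι) P fun _ _ => 1

theorem sum_prod_mul_apply (hP : ∑ y, P y = 1) (i : ι) (f : X → ℝ) :
    ∑ xs : ι → X, (∏ j, P (xs j)) * f (xs i) = ∑ y, P y * f y := by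
  simpa [ite_apply, mul_ite, hP] using sum_prod_mul_prod P fun j => if j = i then f else 1

theorem sum_prod_mul_apply_mul_apply (hP : ∑ y, P y = 1) {i i' : ι} (hi : i ≠ i')
    (f g : X → ℝ) :
    ∑ xs : ι → X, (∏ j, P (xs j)) * (f (xs i) * g (xs i')) =
      (∑ y, P y * f y) * ∑ y, P y * g y := by
  set F : ι → X → ℝ := fun j => if j = i then f else if j = i' then g else 1
  have hF {c : ι} (hc : c ≠ i ∧ c ≠ i') : F c = 1 := by simp [F, hc.1, hc.2]
  have hFi : F i = f := by simp [F]
  have hFi' : F i' = g := by simp [F, hi.symm]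
  have hprod (xs : ι → X) : ∏ j, F j (xs j) = f (xs i) * g (xs i') := by
    rw [prod_eq_mul (f := fun j => F j (xs j)) i i' hi (fun c _ hc => by simp [hF hc])
      (by simp) (by simp), hFi, hFi']
  have h := sum_prod_mul_prod P F
  rwa [prod_eq_mul i i' hi (fun c _ hc => by simp [hF hc, hP]) (by simp) (by simp), hFi, hFi',
    Fintype.sum_congr _ _ fun xs => by rw [hprod]] at h

theorem sum_prod_mul_sum_sq (hP : ∑ y, P y = 1) {Z : X → ℝ} (hZ : ∑ y, P y * Z y = 0) :
    ∑ xs : ι → X, (∏ j, P (xs j)) * (∑ i, Z (xs i)) ^ 2 =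
      Fintype.card ι * ∑ y, P y * Z y ^ 2 := by
  have hcov (i i' : ι) : ∑ xs : ι → X, (∏ j, P (xs j)) * (Z (xs i) * Z (xs i')) =
      if i = i' then ∑ y, P y * Z y ^ 2 else 0 := by
    split_ifs with h
    · subst h
      simpa [sq] using sum_prod_mul_apply hP i fun y => Z y * Z y
    · rw [sum_prod_mul_apply_mul_apply hP h, hZ, zero_mul]
  simp_rw [sq, sum_mul_sum, mul_sum]
  rw [sum_comm]
  simp_rw [sum_comm (s := univ (α := ι → X)), hcov, sum_ite_eq, if_pos (mem_univ _), sum_const,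
    card_univ, nsmul_eq_mul, sq, mul_sum]

end ProductWeights

theorem sum_filter_lt_abs_le_one_div_sq {S : Type*} [Fintype S] {w g : S → ℝ}
    (hw : ∀ s, 0 ≤ w s) {δ : ℝ} (hδ : 0 < δ) :
    ∑ s ∈ univ.filter (fun s => δ * Real.sqrt (∑ t, w t * g t ^ 2) < |g s|), w s ≤
      1 / δ ^ 2 := by
  set V := ∑ t, w t * g t ^ 2
  set bad := univ.filter (fun s => δ * Real.sqrt V < |g s|)
  have hV : 0 ≤ V := sum_nonneg fun t _ => mul_nonneg (hw t) (sq_nonneg _)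
  have hbad {s : S} (hs : s ∈ bad) : δ ^ 2 * V < g s ^ 2 := by
    rw [← Real.sq_sqrt hV, ← mul_pow, ← sq_abs (g s)]
    exact pow_lt_pow_left₀ (mem_filter.1 hs).2 (by positivity) two_ne_zero
  rcases hV.eq_or_lt with hV0 | hVpos
  · have hzero := (sum_eq_zero_iff_of_nonneg fun t _ => mul_nonneg (hw t) (sq_nonneg (g t))).1
      hV0.symm
    rw [sum_eq_zero fun s hs => ?_]
    · positivity
    · have hgs := hbad hs
      rw [← hV0, mul_zero] at hgs
      simpa [hgs.ne'] using hzero s (mem_univ s)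
  · have hmarkov : δ ^ 2 * V * ∑ s ∈ bad, w s ≤ V :=
      calc δ ^ 2 * V * ∑ s ∈ bad, w s ≤ ∑ s ∈ bad, w s * g s ^ 2 := by
            rw [mul_sum]
            exact sum_le_sum fun s hs => by nlinarith [hbad hs, hw s]
        _ ≤ V := sum_le_sum_of_subset_of_nonneg (subset_univ _)
            fun t _ _ => mul_nonneg (hw t) (sq_nonneg _)
    rw [le_div_iff₀ (by positivity)]
    nlinarith

theorem countIn_sub_eq_sum {X : Type*} {n : ℕ} (x : X) (xs : Fin n → X) (p : ℝ) :
    (countIn x xs : ℝ) - n * p = ∑ i, ((if xs i = x then 1 else 0) - p) := by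
  simp [sum_sub_distrib, sum_boole, countIn]

theorem sum_prod_mul_countIn_sub_sq {X : Type*} [Fintype X] {P : X → ℝ} (hP : IsProbDist P)
    (n : ℕ) (x : X) :
    ∑ xs : Fin n → X, (∏ j, P (xs j)) * ((countIn x xs : ℝ) - n * P x) ^ 2 =
      n * (P x * (1 - P x)) := by
  set Z : X → ℝ := fun y => (if y = x then 1 else 0) - P x
  have hZ : ∑ y, P y * Z y = 0 := by simp [Z, mul_sub, ← sum_mul, hP.2]
  have hZ2 : ∑ y, P y * Z y ^ 2 = P x * (1 - P x) := by
    have hsq (y : X) :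
        P y * Z y ^ 2 = P y * (if y = x then 1 else 0) * (1 - 2 * P x) + P x ^ 2 * P y := by
      by_cases h : y = x <;> simp [Z, h] <;> ring
    simp only [hsq, sum_add_distrib, ← sum_mul, ← mul_sum, mul_ite, mul_one, mul_zero,
      sum_ite_eq', mem_univ, if_true, hP.2]
    ring
  simp_rw [countIn_sub_eq_sum x _ (P x)]
  have h := sum_prod_mul_sum_sq (ι := Fin n) hP.2 hZ
  rw [Fintype.card_fin, hZ2] at h
  exact h

section ProdProb

variable {X : Type*} [Fintype X] {P : X → ℝ} {n : ℕ}

theorem prodProb_le_one (hP : IsProbDist P) (A : Finset (Fin n → X)) : prodProb P A ≤ 1 :=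
  (sum_le_sum_of_subset_of_nonneg (subset_univ A) fun xs _ _ =>
    prod_nonneg fun j _ => hP.1 (xs j)).trans_eq (sum_prod_eq_one hP.2)

theorem prodProb_compl (hP : IsProbDist P) (A : Finset (Fin n → X)) :
    prodProb P Aᶜ = 1 - prodProb P A := by
  rw [eq_sub_iff_add_eq, prodProb, prodProb, sum_compl_add_sum, sum_prod_eq_one hP.2]

theorem prodProb_union_le (hP : ∀ x, 0 ≤ P x) (A B : Finset (Fin n → X)) :
    prodProb P (A ∪ B) ≤ prodProb P A + prodProb P B := by
  rw [prodProb, prodProb, prodProb, ← sum_union_inter]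
  exact le_add_of_nonneg_right (sum_nonneg fun xs _ => prod_nonneg fun j _ => hP (xs j))

theorem prodProb_sup_le_sum {ι : Type*} (hP : ∀ x, 0 ≤ P x) (s : Finset ι)
    (A : ι → Finset (Fin n → X)) : prodProb P (s.sup A) ≤ ∑ i ∈ s, prodProb P (A i) :=
  apply_sup_le_sum (by simp [prodProb]) (prodProb_union_le hP _ _) s

theorem compl_typicalSet (P : X → ℝ) (n : ℕ) (δ : ℝ) :
    (typicalSet n P δ)ᶜ = univ.sup fun x => univ.filter fun xs : Fin n → X =>
      δ * Real.sqrt (n * (P x * (1 - P x))) < |(countIn x xs : ℝ) - n * P x| := by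
  ext xs
  simp [typicalSet, mem_sup, Real.sqrt_mul (Nat.cast_nonneg n), mul_assoc]

theorem one_sub_card_div_sq_le_prodProb_typicalSet (hP : IsProbDist P) {δ : ℝ} (hδ : 0 < δ) :
    1 - Fintype.card X / δ ^ 2 ≤ prodProb P (typicalSet n P δ) := by
  have hatyp (x : X) : prodProb P (univ.filter fun xs : Fin n → X =>
      δ * Real.sqrt (n * (P x * (1 - P x))) < |(countIn x xs : ℝ) - n * P x|) ≤
        1 / δ ^ 2 := by
    rw [← sum_prod_mul_countIn_sub_sq hP n x]
    exact sum_filter_lt_abs_le_one_div_sq (fun xs => prod_nonneg fun j _ => hP.1 (xs j)) hδ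
  have := (prodProb_sup_le_sum hP.1 univ _).trans (sum_le_sum fun x _ => hatyp x)
  rw [← compl_typicalSet, prodProb_compl hP, sum_const, card_univ, nsmul_eq_mul] at this
  linarith [show (Fintype.card X : ℝ) * (1 / δ ^ 2) = Fintype.card X / δ ^ 2 by ring]

end ProdProb

section Entropy

open Real

theorem log_le_div_exp_one {y : ℝ} (hy : 0 < y) : log y ≤ y / exp 1 := by
  rw [le_div_iff₀ (exp_pos 1), mul_comm]
  simpa [exp_log hy] using exp_one_mul_le_exp (x := log y)

theorem sqrt_mul_neg_log_le {p : ℝ} (hp : 0 < p) : √p * -log p ≤ 2 / exp 1 := by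
  have hsqrt : 0 < √p := sqrt_pos.2 hp
  have hlog : -log p = 2 * log (√p)⁻¹ := by rw [log_inv, log_sqrt hp.le]; ring
  calc √p * -log p = 2 * (√p * log (√p)⁻¹) := by rw [hlog]; ring
    _ ≤ 2 * (√p * ((√p)⁻¹ / exp 1)) := by
        gcongr; exact log_le_div_exp_one (inv_pos.2 hsqrt)
    _ = 2 / exp 1 := by field_simp

theorem Kconst_eq : Kconst = 2 / exp 1 / log 2 := by
  rw [Kconst, logb, log_exp]
  ring

theorem sqrt_mul_one_sub_mul_abs_logb_le_Kconst {p : ℝ} (hp0 : 0 ≤ p) (hp1 : p ≤ 1) :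
    √(p * (1 - p)) * |logb 2 p| ≤ Kconst := by
  have hlog2 : 0 < log 2 := log_pos one_lt_two
  rcases hp0.eq_or_lt with rfl | hp
  · rw [Kconst_eq]; simp; positivity
  have habs : |logb 2 p| = -log p / log 2 := by
    rw [logb, abs_div, abs_of_pos hlog2, abs_of_nonpos (log_nonpos hp0 hp1)]
  have hsqrt : √(p * (1 - p)) ≤ √p := sqrt_le_sqrt (by nlinarith)
  rw [habs, Kconst_eq, ← mul_div_assoc]
  gcongr
  calc √(p * (1 - p)) * -log p ≤ √p * -log p := by
        gcongr; linarith [log_nonpos hp0 hp1]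
    _ ≤ 2 / exp 1 := sqrt_mul_neg_log_le hp

end Entropy

section TypicalSequence

variable {X : Type*} [Fintype X] {P : X → ℝ} {n : ℕ} {δ : ℝ} {xs : Fin n → X}

theorem prod_apply_eq_prod_pow_countIn {M : Type*} [CommMonoid M] (P : X → M)
    (xs : Fin n → X) : ∏ j, P (xs j) = ∏ x, P x ^ countIn x xs := by
  simp_rw [countIn, ← prod_const]
  exact (prod_fiberwise' univ xs P).symm

theorem countIn_eq_zero_of_mem_typicalSet (hxs : xs ∈ typicalSet n P δ) {x : X}
    (hx : P x = 0) : countIn x xs = 0 := by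
  have h := (mem_filter.1 hxs).2 x
  simp only [hx, mul_zero, zero_mul, Real.sqrt_zero, sub_zero, Nat.abs_cast] at h
  exact_mod_cast h.antisymm (Nat.cast_nonneg _)

theorem prod_apply_eq_exp2_of_mem_typicalSet (hP : IsProbDist P)
    (hxs : xs ∈ typicalSet n P δ) :
    ∏ j, P (xs j) = exp2 (∑ x, countIn x xs * Real.logb 2 (P x)) := by
  rw [prod_apply_eq_prod_pow_countIn, exp2, Real.rpow_sum_of_pos two_pos]
  refine prod_congr rfl fun x _ => ?_
  rcases (hP.1 x).eq_or_lt with hx | hx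
  · simp [countIn_eq_zero_of_mem_typicalSet hxs hx.symm]
  · rw [mul_comm, Real.rpow_mul zero_le_two, Real.rpow_logb two_pos (by norm_num) hx,
      Real.rpow_natCast]

theorem abs_sum_countIn_mul_logb_add_le (hP : IsProbDist P) (hδ : 0 ≤ δ)
    (hxs : xs ∈ typicalSet n P δ) :
    |∑ x, countIn x xs * Real.logb 2 (P x) + n * shannonEntropy P| ≤
      Kconst * Fintype.card X * δ * Real.sqrt n := by
  have hP1 (x : X) : P x ≤ 1 := hP.2 ▸ single_le_sum (fun y _ => hP.1 y) (mem_univ x)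
  have hterm (x : X) : |((countIn x xs : ℝ) - n * P x) * Real.logb 2 (P x)| ≤
      Kconst * δ * Real.sqrt n :=
    calc |((countIn x xs : ℝ) - n * P x) * Real.logb 2 (P x)|
        ≤ δ * Real.sqrt n * Real.sqrt (P x * (1 - P x)) * |Real.logb 2 (P x)| := by
          rw [abs_mul]; gcongr; exact (mem_filter.1 hxs).2 x
      _ ≤ δ * Real.sqrt n * Kconst := by
          rw [mul_assoc]
          gcongr
          exact sqrt_mul_one_sub_mul_abs_logb_le_Kconst (hP.1 x) (hP1 x)
      _ = Kconst * δ * Real.sqrt n := by ring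
  have hsum : ∑ x, countIn x xs * Real.logb 2 (P x) + n * shannonEntropy P =
      ∑ x, ((countIn x xs : ℝ) - n * P x) * Real.logb 2 (P x) := by
    rw [shannonEntropy, mul_neg, ← sub_eq_add_neg, mul_sum, ← sum_sub_distrib]
    exact sum_congr rfl fun x _ => by ring
  rw [hsum]
  calc _ ≤ ∑ x, |((countIn x xs : ℝ) - n * P x) * Real.logb 2 (P x)| := abs_sum_le_sum_abs _ _
    _ ≤ ∑ _x : X, Kconst * δ * Real.sqrt n := sum_le_sum fun x _ => hterm x
    _ = Kconst * Fintype.card X * δ * Real.sqrt n := by simp; ring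

theorem prod_apply_mem_Icc_of_mem_typicalSet (hP : IsProbDist P) (hδ : 0 ≤ δ)
    (hxs : xs ∈ typicalSet n P δ) :
    ∏ j, P (xs j) ∈ Set.Icc
      (exp2 (-(n * shannonEntropy P + Kconst * Fintype.card X * δ * Real.sqrt n)))
      (exp2 (-(n * shannonEntropy P - Kconst * Fintype.card X * δ * Real.sqrt n))) := by
  have h := abs_le.1 (abs_sum_countIn_mul_logb_add_le hP hδ hxs)
  rw [prod_apply_eq_exp2_of_mem_typicalSet hP hxs]
  exact ⟨Real.rpow_le_rpow_of_exponent_le one_le_two (by linarith),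
    Real.rpow_le_rpow_of_exponent_le one_le_two (by linarith)⟩

end TypicalSequence

theorem typicalSet_card_general {X : Type} [Fintype X] (P : X → ℝ) (hP : IsProbDist P)
    (n : ℕ) (δ : ℝ) (hδ : 0 < δ) :
    ((typicalSet n P δ).card : ℝ)
        ≤ exp2 ((n : ℝ) * shannonEntropy P + Kconst * (Fintype.card X) * δ * Real.sqrt n) ∧
      (1 - (Fintype.card X : ℝ) / δ ^ 2) *
          exp2 ((n : ℝ) * shannonEntropy P - Kconst * (Fintype.card X) * δ * Real.sqrt n)
        ≤ ((typicalSet n P δ).card : ℝ) := by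
  have hbounds (xs) (hxs : xs ∈ typicalSet n P δ) :=
    prod_apply_mem_Icc_of_mem_typicalSet hP hδ.le hxs
  have hexp2_neg (t : ℝ) : exp2 (-t) = (exp2 t)⁻¹ := Real.rpow_neg zero_le_two t
  have hexp2_pos (t : ℝ) : 0 < exp2 t := Real.rpow_pos_of_pos two_pos t
  constructor
  · have h := (card_nsmul_le_sum _ _ _ fun xs hxs => (hbounds xs hxs).1).trans
      (prodProb_le_one hP (typicalSet n P δ))
    rwa [nsmul_eq_mul, hexp2_neg, ← div_eq_mul_inv, div_le_one (hexp2_pos _)] at h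
  · have h := (one_sub_card_div_sq_le_prodProb_typicalSet hP hδ).trans
      (sum_le_card_nsmul _ _ _ fun xs hxs => (hbounds xs hxs).2)
    rwa [nsmul_eq_mul, hexp2_neg, ← div_eq_mul_inv, le_div_iff₀ (hexp2_pos _)] at h

/-- **Lemma 1, part 3 (Typical sequences, cardinality).**
`|T^n_{P,δ}| ≤ exp₂(nH(P) + Kaδ√n)` and
`|T^n_{P,δ}| ≥ (1 − a/δ²) exp₂(nH(P) − Kaδ√n)`, with `K = 2 log₂(e)/e`. -/
theorem typicalSet_card {X : Type} [Fintype X] (P : X → ℝ) (hP : IsProbDist P)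
    (n : ℕ) (hn : 0 < n) (δ : ℝ) (hδ : 0 < δ) :
    ((typicalSet n P δ).card : ℝ)
        ≤ exp2 ((n : ℝ) * shannonEntropy P + Kconst * (Fintype.card X) * δ * Real.sqrt n) ∧
      (1 - (Fintype.card X : ℝ) / δ ^ 2) *
          exp2 ((n : ℝ) * shannonEntropy P - Kconst * (Fintype.card X) * δ * Real.sqrt n)
        ≤ ((typicalSet n P δ).card : ℝ) :=
  typicalSet_card_general P hP n δ hδ
end
end

section
/- Let Λ be an operator with 0 ≤ Λ ≤ 1 on a finite-dimensional Hilbert space and ρ a density operator commuting with Λ, such that for some λ, μ₁, μ₂ > 0 one has Tr(ρΛ) ≥ 1 − λ and μ₁Λ ≤ √Λ ρ √Λ ≤ μ₂Λ (in the positive semidefinite order). Then (1−λ)/μ₂ ≤ Tr Λ ≤ 1/μ₁, and every η-shadow B of ρ satisfies Tr B ≥ (η − λ)/μ₂. -/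
open Matrix BigOperators Finset
open scoped Classical ComplexOrder

noncomputable section

/-- The positive semidefinite square root, as `Matrix.PosSemidef.sqrt` was defined in the
older Mathlib (removed since). -/
def Matrix.PosSemidef.sqrt {n 𝕜 : Type*} [Fintype n] [RCLike 𝕜] [DecidableEq n]
    {A : Matrix n n 𝕜} (hA : A.PosSemidef) : Matrix n n 𝕜 :=
  hA.1.eigenvectorUnitary.1 * diagonal ((↑) ∘ Real.sqrt ∘ hA.1.eigenvalues) *
    (star hA.1.eigenvectorUnitary : Matrix n n 𝕜)

/-! Since `ρ` commutes with `Λ`, also with `√Λ`, so `√Λ ρ √Λ = ρΛ` and the hypotheses become trace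
inequalities for `ρΛ`. For a shadow `B`, split `Tr(ρB) = Tr(ρΛB) + Tr(ρ(1 - Λ)B)`: the first term is
at most `μ₂ Tr(ΛB) ≤ μ₂ Tr B`, and, `ρ(1 - Λ)` being positive as a product of commuting positive
operators, the second is at most `Tr(ρ(1 - Λ)) ≤ λ`. -/

open scoped MatrixOrder

namespace Matrix

variable {n 𝕜 : Type*} [Fintype n] [RCLike 𝕜]

lemma trace_mono {A B : Matrix n n 𝕜} (h : A ≤ B) : A.trace ≤ B.trace :=
  (tracePositiveLinearMap n ℝ 𝕜).mono h

variable [DecidableEq n]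

lemma PosSemidef.sqrt_eq_cfc_sqrt {A : Matrix n n 𝕜} (hA : A.PosSemidef) :
    hA.sqrt = CFC.sqrt A := by
  rw [CFC.sqrt_eq_real_sqrt A hA.nonneg, cfcₙ_eq_cfc, hA.1.cfc_eq]
  rfl

lemma cfc_sqrt_mul_mul_cfc_sqrt_of_commute {A B : Matrix n n 𝕜} (hA : 0 ≤ A) (h : Commute A B) :
    CFC.sqrt A * B * CFC.sqrt A = B * A := by
  have hB : Commute (CFC.sqrt A) B := by
    rw [CFC.sqrt_eq_real_sqrt A hA, cfcₙ_eq_cfc]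
    exact h.cfc_real _
  rw [hB.eq, mul_assoc, CFC.sqrt_mul_sqrt_self A hA]

lemma trace_mul_nonneg {A B : Matrix n n 𝕜} (hA : 0 ≤ A) (hB : 0 ≤ B) : 0 ≤ (A * B).trace := by
  have hconj : 0 ≤ CFC.sqrt A * B * CFC.sqrt A := by
    simpa [(CFC.sqrt_nonneg A).isSelfAdjoint.star_eq] using
      conjugate_nonneg_of_nonneg hB (CFC.sqrt_nonneg A)
  calc 0 ≤ (CFC.sqrt A * B * CFC.sqrt A).trace := hconj.posSemidef.trace_nonneg
    _ = (A * B).trace := by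
      rw [mul_assoc, trace_mul_comm, mul_assoc, CFC.sqrt_mul_sqrt_self A hA, trace_mul_comm]

lemma trace_mul_le_trace_mul_left {A B C : Matrix n n 𝕜} (hC : 0 ≤ C) (h : A ≤ B) :
    (C * A).trace ≤ (C * B).trace := by
  simpa [mul_sub, trace_sub] using trace_mul_nonneg hC (sub_nonneg.mpr h)

lemma trace_mul_le_trace_mul_right {A B C : Matrix n n 𝕜} (hC : 0 ≤ C) (h : A ≤ B) :
    (A * C).trace ≤ (B * C).trace := by
  simpa [trace_mul_comm _ C] using trace_mul_le_trace_mul_left hC h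

lemma trace_mul_le_trace_sub_trace_mul_add {Λ ρ B : Matrix n n 𝕜} {μ : ℝ} (hμ : 0 ≤ μ)
    (hΛ1 : Λ ≤ 1) (hρ : 0 ≤ ρ) (hcomm : Commute ρ Λ) (hup : ρ * Λ ≤ (μ : 𝕜) • Λ)
    (hB : 0 ≤ B) (hB1 : B ≤ 1) :
    (ρ * B).trace ≤ ρ.trace - (ρ * Λ).trace + μ * B.trace := by
  have hρ_compl : 0 ≤ ρ * (1 - Λ) :=
    ((Commute.one_right ρ).sub_right hcomm).mul_nonneg hρ (sub_nonneg.mpr hΛ1)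
  have hΛB : (Λ * B).trace ≤ B.trace := by
    simpa using trace_mul_le_trace_mul_right hB hΛ1
  calc (ρ * B).trace = (ρ * (1 - Λ) * B).trace + (ρ * Λ * B).trace := by
        rw [← trace_add, ← add_mul, mul_sub, mul_one, sub_add_cancel]
    _ ≤ (ρ * (1 - Λ) * 1).trace + ((μ : 𝕜) • Λ * B).trace :=
        add_le_add (trace_mul_le_trace_mul_left hρ_compl hB1) (trace_mul_le_trace_mul_right hB hup)
    _ ≤ ρ.trace - (ρ * Λ).trace + μ * B.trace := by
        rw [mul_one, mul_sub, mul_one, trace_sub, smul_mul_assoc, trace_smul, smul_eq_mul]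
        exact add_le_add_right (mul_le_mul_of_nonneg_left hΛB (by exact_mod_cast hμ)) _

end Matrix

theorem abstract_shadow_bound_general {ι : Type} [Fintype ι] [DecidableEq ι]
    (Λ ρ : Matrix ι ι ℂ) (hΛ : Λ.PosSemidef)
    (hΛ1 : ((1 : Matrix ι ι ℂ) - Λ).PosSemidef)
    (hρ : IsState ρ) (hcomm : ρ * Λ = Λ * ρ)
    (lam μ₁ μ₂ : ℝ) (hμ₁ : 0 < μ₁) (hμ₂ : 0 < μ₂)
    (htr : 1 - lam ≤ (Matrix.trace (ρ * Λ)).re)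
    (hlow : (hΛ.sqrt * ρ * hΛ.sqrt - (μ₁ : ℂ) • Λ).PosSemidef)
    (hup : ((μ₂ : ℂ) • Λ - hΛ.sqrt * ρ * hΛ.sqrt).PosSemidef) :
    ((1 - lam) / μ₂ ≤ (Matrix.trace Λ).re ∧ (Matrix.trace Λ).re ≤ 1 / μ₁) ∧
      ∀ (η : ℝ) (B : Matrix ι ι ℂ), IsShadow ρ B η →
        (η - lam) / μ₂ ≤ (Matrix.trace B).re := by
  have hρ0 : 0 ≤ ρ := hρ.1.nonneg
  have hρ1 : ρ.trace.re = 1 := by simp [hρ.2]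
  have hS : hΛ.sqrt * ρ * hΛ.sqrt = ρ * Λ := by
    rw [hΛ.sqrt_eq_cfc_sqrt]
    exact cfc_sqrt_mul_mul_cfc_sqrt_of_commute hΛ.nonneg hcomm.symm
  rw [hS] at hlow hup
  have hμ₁Λ : μ₁ * Λ.trace.re ≤ (ρ * Λ).trace.re := by
    simpa using Complex.re_le_re (trace_mono (le_iff.mpr hlow))
  have hμ₂Λ : (ρ * Λ).trace.re ≤ μ₂ * Λ.trace.re := by
    simpa using Complex.re_le_re (trace_mono (le_iff.mpr hup))
  have hρΛ : (ρ * Λ).trace.re ≤ 1 := by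
    simpa [hρ1] using Complex.re_le_re (trace_mul_le_trace_mul_left hρ0 (le_iff.mpr hΛ1))
  refine ⟨⟨by rw [div_le_iff₀ hμ₂]; linarith, by rw [le_div_iff₀ hμ₁]; linarith⟩, ?_⟩
  rintro η B ⟨hB, hB1, hη⟩
  have hshadow := Complex.re_le_re <| trace_mul_le_trace_sub_trace_mul_add hμ₂.le
    (le_iff.mpr hΛ1) hρ0 hcomm (le_iff.mpr hup) hB.nonneg (le_iff.mpr hB1)
  simp only [Complex.coe_algebraMap, Complex.add_re, Complex.sub_re, Complex.re_ofReal_mul,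
    hρ1] at hshadow
  rw [div_le_iff₀ hμ₂]
  linarith

/-- **Lemma 3 (Shadow bound).** If `0 ≤ Λ ≤ 1`, `ρ` is a state commuting with `Λ`,
`Tr(ρΛ) ≥ 1 − λ` and `μ₁Λ ≤ √Λ ρ √Λ ≤ μ₂Λ`, then `(1−λ)/μ₂ ≤ Tr Λ ≤ 1/μ₁`, and
every `η`-shadow `B` of `ρ` satisfies `Tr B ≥ (η − λ)/μ₂`. -/
theorem abstract_shadow_bound {ι : Type} [Fintype ι] [DecidableEq ι]
    (Λ ρ : Matrix ι ι ℂ) (hΛ : Λ.PosSemidef)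
    (hΛ1 : ((1 : Matrix ι ι ℂ) - Λ).PosSemidef)
    (hρ : IsState ρ) (hcomm : ρ * Λ = Λ * ρ)
    (lam μ₁ μ₂ : ℝ) (hlam : 0 < lam) (hμ₁ : 0 < μ₁) (hμ₂ : 0 < μ₂)
    (htr : 1 - lam ≤ (Matrix.trace (ρ * Λ)).re)
    (hlow : (hΛ.sqrt * ρ * hΛ.sqrt - (μ₁ : ℂ) • Λ).PosSemidef)
    (hup : ((μ₂ : ℂ) • Λ - hΛ.sqrt * ρ * hΛ.sqrt).PosSemidef) :
    ((1 - lam) / μ₂ ≤ (Matrix.trace Λ).re ∧ (Matrix.trace Λ).re ≤ 1 / μ₁) ∧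
      ∀ (η : ℝ) (B : Matrix ι ι ℂ), IsShadow ρ B η →
        (η - lam) / μ₂ ≤ (Matrix.trace B).re :=
  abstract_shadow_bound_general Λ ρ hΛ hΛ1 hρ hcomm lam μ₁ μ₂ hμ₁ hμ₂ htr hlow hup
end
end

section
/- Let W be a classical–quantum channel from a finite alphabet X with |X| = a into the density operators on ℂ^d. For every x^n ∈ X^n of type P and every δ ≥ 0, writing Π^n = Π^n_{W,δ}(x^n), one has Π^n·exp₂(−nH(W|P) − K·d·√a·δ·√n) ≤ Π^n W_{x^n} Π^n ≤ Π^n·exp₂(−nH(W|P) + K·d·√a·δ·√n) in the positive semidefinite order; moreover Tr Π^n ≤ exp₂(nH(W|P) + K·d·√a·δ·√n) and, for δ > 0, Tr Π^n ≥ (1 − ad/δ²)·exp₂(nH(W|P) − K·d·√a·δ·√n), where K = 2 log₂(e)/e and H(W|P) = Σ_x P(x)H(W_x). -/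
open Matrix BigOperators Finset
open scoped Classical ComplexOrder

noncomputable section

/-!
On the conditional typical set `T` the sequence `js` has probability
`p(js) = ∏ i, q (xs i) (js i) = exp₂ (∑_{x,k} N(x,k) log₂ q x k)`, where the counts `N(x,k)` differ
from `N(x) q x k` by at most `δ √N(x) √(q x k (1 - q x k))`. As `√(t (1 - t)) |log₂ t| ≤ K` on
`[0, 1]` and `∑ₓ √N(x) ≤ √a √n`, the exponent is within `K d √a δ √n` of `-n H(W|P)`.
The projectors `⊗ᵢ π (xs i) (js i)` are mutually orthogonal, so `Π W_{xⁿ} Π = ∑_{js ∈ T} p(js) Π_js`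
and `Tr Π = |T|`: this gives both operator inequalities, and the trace bounds follow from
`p(T) ≤ 1` and from `p(T) ≥ 1 - a d / δ²` (Chebyshev for each of the `a d` counts, then a union
bound).
-/

section OrthogonalProjections

variable {ι κ : Type*}

theorem sum_smul_mul_sum_smul {R : Type*} [CommSemiring R] [Fintype ι] [DecidableEq κ]
    {E : κ → Matrix ι ι R} (hE : ∀ j k, E j * E k = if j = k then E j else 0)
    (s t : Finset κ) (a b : κ → R) :
    (∑ j ∈ s, a j • E j) * (∑ k ∈ t, b k • E k) = ∑ j ∈ s ∩ t, (a j * b j) • E j := by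
  simp_rw [Finset.sum_mul_sum, smul_mul_smul_comm, hE, smul_ite, smul_zero,
    Finset.sum_ite_eq, Finset.sum_ite_mem]

theorem posSemidef_sum_smul {E : κ → Matrix ι ι ℂ} (hE : ∀ j, (E j).PosSemidef) {s : Finset κ}
    {c : κ → ℝ} (hc : ∀ j ∈ s, 0 ≤ c j) : (∑ j ∈ s, (c j : ℂ) • E j).PosSemidef :=
  Matrix.posSemidef_sum s fun j hj => (hE j).smul (Complex.zero_le_real.mpr (hc j hj))

theorem Matrix.posSemidef_of_isHermitian_of_mul_self [Fintype ι] {E : Matrix ι ι ℂ}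
    (hE : E.IsHermitian) (hEE : E * E = E) : E.PosSemidef := by
  simpa [hE.eq, hEE] using Matrix.posSemidef_conjTranspose_mul_self E

end OrthogonalProjections

section TensorPow

variable {d n : ℕ}

theorem tensorPow_mul (A B : Fin n → Mat d) :
    tensorPow A * tensorPow B = tensorPow fun i => A i * B i := by
  ext j k
  simp only [tensorPow, Matrix.mul_apply, Matrix.of_apply, ← Finset.prod_mul_distrib]
  exact (Fintype.prod_sum fun i m => A i (j i) m * B i m (k i)).symm

theorem tensorPow_conjTranspose (A : Fin n → Mat d) :
    (tensorPow A)ᴴ = tensorPow fun i => (A i)ᴴ := by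
  ext j k
  simp [tensorPow]

theorem trace_tensorPow (A : Fin n → Mat d) : (tensorPow A).trace = ∏ i, (A i).trace := by
  simp only [Matrix.trace, Matrix.diag, tensorPow, Matrix.of_apply]
  exact (Fintype.prod_sum fun i m => A i m m).symm

theorem tensorPow_sum_smul {κ : Type*} [Fintype κ] (c : Fin n → κ → ℂ) (A : Fin n → κ → Mat d) :
    (tensorPow fun i => ∑ j, c i j • A i j) =
      ∑ js : Fin n → κ, (∏ i, c i (js i)) • tensorPow fun i => A i (js i) := by
  ext a b
  simp only [tensorPow, Matrix.of_apply, Matrix.sum_apply, Matrix.smul_apply, smul_eq_mul,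
    ← Finset.prod_mul_distrib]
  exact Fintype.prod_sum fun i j => c i j * A i j (a i) (b i)

theorem tensorPow_mul_tensorPow_of_orthogonal {κ : Type*} [DecidableEq κ] {F : Fin n → κ → Mat d}
    (hF : ∀ i j k, F i j * F i k = if j = k then F i j else 0) (js ks : Fin n → κ) :
    (tensorPow fun i => F i (js i)) * (tensorPow fun i => F i (ks i)) =
      if js = ks then tensorPow fun i => F i (js i) else 0 := by
  rw [tensorPow_mul]
  split_ifs with h
  · simp [h, hF]
  · obtain ⟨i, hi⟩ := Function.ne_iff.mp h
    ext a b
    simp [tensorPow, Finset.prod_eq_zero (Finset.mem_univ i), hF, hi]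

theorem posSemidef_tensorPow {A : Fin n → Mat d} (hA : ∀ i, (A i).IsHermitian)
    (hAA : ∀ i, A i * A i = A i) : (tensorPow A).PosSemidef := by
  refine Matrix.posSemidef_of_isHermitian_of_mul_self ?_ ?_
  · rw [Matrix.IsHermitian, tensorPow_conjTranspose]
    simp only [(hA _).eq]
  · rw [tensorPow_mul]
    simp only [hAA]

theorem posSemidef_sum_smul_tensorPow {κ : Type*} {F : Fin n → κ → Mat d}
    (hF : ∀ i j, (F i j).IsHermitian) (hFF : ∀ i j, F i j * F i j = F i j)
    {s : Finset (Fin n → κ)} {c : (Fin n → κ) → ℝ} (hc : ∀ js ∈ s, 0 ≤ c js) :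
    (∑ js ∈ s, (c js : ℂ) • tensorPow fun i => F i (js i)).PosSemidef :=
  posSemidef_sum_smul (fun _ => posSemidef_tensorPow (fun _ => hF _ _) fun _ => hFF _ _) hc

end TensorPow

theorem sum_eq_sum_of_doublyStochastic {ι κ R : Type*} [Fintype ι] [Fintype κ] [CommSemiring R]
    {S : ι → κ → R} (hrow : ∀ i, ∑ j, S i j = 1) (hcol : ∀ j, ∑ i, S i j = 1) {f : ι → R}
    {g : κ → R} (hfg : ∀ i j, S i j ≠ 0 → f i = g j) : ∑ i, f i = ∑ j, g j := by
  have hS (i : ι) (j : κ) : S i j * f i = S i j * g j := by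
    by_cases h : S i j = 0
    · simp [h]
    · rw [hfg i j h]
  calc ∑ i, f i = ∑ i, ∑ j, S i j * f i := by simp [← Finset.sum_mul, hrow]
    _ = ∑ i, ∑ j, S i j * g j := by simp only [hS]
    _ = ∑ j, g j := by rw [Finset.sum_comm]; simp [← Finset.sum_mul, hcol]

namespace IsDiagonalization

variable {d : ℕ} {ρ : Mat d} {R : Fin d → ℝ} {π : Fin d → Mat d}

theorem mul_eq_ite (hd : IsDiagonalization ρ R π) (j k : Fin d) :
    π j * π k = if j = k then π j else 0 := by
  obtain ⟨-, hidem, -, horth, -⟩ := hd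
  split_ifs with h
  · rw [h, hidem]
  · exact horth j k h

theorem mul_proj (hd : IsDiagonalization ρ R π) (j : Fin d) : ρ * π j = (R j : ℂ) • π j := by
  have horth := hd.mul_eq_ite
  obtain ⟨-, -, -, -, -, hρ, -⟩ := hd
  rw [hρ, Finset.sum_mul]
  simp [horth]

theorem isHermitian (hd : IsDiagonalization ρ R π) : ρ.IsHermitian := by
  obtain ⟨hpsd, -, -, -, -, hρ, hR, -⟩ := hd
  rw [hρ]
  exact (posSemidef_sum_smul hpsd fun j _ => hR j).1

end IsDiagonalization

theorem vnEntropy_eq_shannonEntropy {d : ℕ} {ρ : Mat d} {R : Fin d → ℝ} {π : Fin d → Mat d}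
    (hd : IsDiagonalization ρ R π) : vnEntropy ρ = shannonEntropy R := by
  have hρ := hd.isHermitian
  have hproj := hd.mul_proj
  obtain ⟨-, -, htr, -, hsum, -⟩ := hd
  -- `S i j = ⟨uᵢ, π j uᵢ⟩` for the eigenbasis `u` of `ρ` is doubly stochastic and vanishes
  -- unless the `i`-th eigenvalue is `R j`.
  set U : Mat d := (hρ.eigenvectorUnitary : Mat d)
  set S : Fin d → Fin d → ℂ := fun i j => (star U * π j * U) i i
  have hUU : star U * U = 1 := Unitary.star_mul_self_of_mem hρ.eigenvectorUnitary.2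
  have hUU' : U * star U = 1 := Unitary.mul_star_self_of_mem hρ.eigenvectorUnitary.2
  have hrow (i : Fin d) : ∑ j, S i j = 1 := by
    simp only [S, ← Matrix.sum_apply, ← Finset.sum_mul, ← Finset.mul_sum, hsum,
      Matrix.mul_one, hUU, Matrix.one_apply_eq]
  have hcol (j : Fin d) : ∑ i, S i j = 1 := by
    change (star U * π j * U).trace = 1
    rw [Matrix.trace_mul_cycle, hUU', Matrix.one_mul, htr j]
  have hdiag : star U * ρ * U = Matrix.diagonal (RCLike.ofReal ∘ hρ.eigenvalues) := by
    rw [← hρ.conjStarAlgAut_star_eigenvectorUnitary, Unitary.conjStarAlgAut_star_apply]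
  have hrel (i j : Fin d) : (hρ.eigenvalues i : ℂ) * S i j = R j * S i j := by
    have h : star U * ρ * U * (star U * π j * U) = star U * (ρ * π j) * U := by
      rw [Matrix.mul_assoc, ← Matrix.mul_assoc U, ← Matrix.mul_assoc U, hUU',
        Matrix.one_mul]
      simp only [Matrix.mul_assoc]
    rw [hproj, hdiag, Matrix.mul_smul, Matrix.smul_mul] at h
    simpa [S, Matrix.diagonal_mul] using congrFun (congrFun h i) i
  have hsum := sum_eq_sum_of_doublyStochastic hrow hcol (f := fun i =>
      ((hρ.eigenvalues i * Real.logb 2 (hρ.eigenvalues i) : ℝ) : ℂ))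
    (g := fun j => ((R j * Real.logb 2 (R j) : ℝ) : ℂ)) fun i j hS => by
      rw [Complex.ofReal_injective (mul_right_cancel₀ hS (hrel i j))]
  rw [vnEntropy, dif_pos hρ, shannonEntropy]
  exact_mod_cast congrArg Neg.neg hsum

section ProductDistribution

variable {ι α : Type*} [Fintype ι] [DecidableEq ι] [Fintype α] {r : ι → α → ℝ}

theorem sum_prod_mul_prod_eq_prod_sum (hr : ∀ i, ∑ a, r i a = 1) (S : Finset ι)
    (f : ι → α → ℝ) :
    ∑ js : ι → α, (∏ i, r i (js i)) * ∏ i ∈ S, f i (js i) = ∏ i ∈ S, ∑ a, r i a * f i a := by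
  have hS (js : ι → α) : ∏ i ∈ S, f i (js i) = ∏ i, if i ∈ S then f i (js i) else 1 := by
    rw [Finset.prod_ite_mem, Finset.univ_inter]
  simp_rw [hS, ← Finset.prod_mul_distrib]
  rw [← Fintype.prod_sum fun i a => r i a * if i ∈ S then f i a else 1]
  have hrow (i : ι) : ∑ a, r i a * (if i ∈ S then f i a else 1) =
      if i ∈ S then ∑ a, r i a * f i a else 1 := by
    split_ifs <;> simp [hr]
  simp_rw [hrow, Finset.prod_ite_mem, Finset.univ_inter]

theorem sum_prod_mul_sq_sum_of_centered (hr : ∀ i, ∑ a, r i a = 1) (I : Finset ι)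
    (f : ι → α → ℝ) (hf : ∀ i ∈ I, ∑ a, r i a * f i a = 0) :
    ∑ js : ι → α, (∏ i, r i (js i)) * (∑ i ∈ I, f i (js i)) ^ 2 =
      ∑ i ∈ I, ∑ a, r i a * f i a ^ 2 := by
  have hpair : ∀ i ∈ I, ∀ i' ∈ I,
      ∑ js : ι → α, (∏ l, r l (js l)) * (f i (js i) * f i' (js i')) =
        if i = i' then ∑ a, r i a * (f i a * f i a) else 0 := by
    intro i hi i' hi'
    split_ifs with h
    · subst h
      have hsq := sum_prod_mul_prod_eq_prod_sum hr {i} fun _ a => f i a ^ 2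
      simp only [Finset.prod_singleton, sq] at hsq
      exact hsq
    · simpa [Finset.prod_pair h, hf i hi, hf i' hi'] using
        sum_prod_mul_prod_eq_prod_sum hr {i, i'} f
  simp_rw [sq, Finset.sum_mul_sum, Finset.mul_sum]
  rw [Finset.sum_comm]
  refine Finset.sum_congr rfl fun i hi => ?_
  rw [Finset.sum_comm, Finset.sum_congr rfl (hpair i hi), Finset.sum_ite_eq, if_pos hi]

theorem sum_prod_eq_one_s10 (hr : ∀ i, ∑ a, r i a = 1) : ∑ js : ι → α, ∏ i, r i (js i) = 1 := by
  rw [← Fintype.prod_sum]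
  simp [hr]

theorem sum_prod_le_one (hr0 : ∀ i a, 0 ≤ r i a) (hr : ∀ i, ∑ a, r i a = 1)
    (s : Finset (ι → α)) : ∑ js ∈ s, ∏ i, r i (js i) ≤ 1 :=
  sum_prod_eq_one_s10 hr ▸ Finset.sum_le_sum_of_subset_of_nonneg (Finset.subset_univ s)
    fun js _ _ => Finset.prod_nonneg fun i _ => hr0 i (js i)

end ProductDistribution

section Indicator

variable {α : Type*} [Fintype α] [DecidableEq α] {r : α → ℝ}

theorem sum_mul_indicator_sub (hr : ∑ a, r a = 1) (k : α) :
    ∑ a, r a * ((if a = k then 1 else 0) - r k) = 0 := by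
  simp [mul_sub, Finset.sum_sub_distrib, ← Finset.sum_mul, hr]

theorem sum_mul_indicator_sub_sq (hr : ∑ a, r a = 1) (k : α) :
    ∑ a, r a * ((if a = k then 1 else 0) - r k) ^ 2 = r k * (1 - r k) := by
  have h (a : α) : r a * ((if a = k then 1 else 0) - r k) ^ 2 =
      (if a = k then r a else 0) * (1 - 2 * r k) + r a * r k ^ 2 := by
    split_ifs <;> ring
  simp only [h, Finset.sum_add_distrib, ← Finset.sum_mul, hr, Finset.sum_ite_eq', Finset.mem_univ,
    if_true]
  ring

end Indicator

theorem sum_filter_mul_sqrt_lt_abs_le_inv_sq {β : Type*} [Fintype β] {p g : β → ℝ}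
    (hp : ∀ b, 0 ≤ p b) {V δ : ℝ} (hV : ∑ b, p b * g b ^ 2 ≤ V) (hδ : 0 < δ) :
    ∑ b ∈ Finset.univ.filter (fun b => δ * √V < |g b|), p b ≤ 1 / δ ^ 2 := by
  set B := Finset.univ.filter (fun b => δ * √V < |g b|)
  have hterm (b : β) : 0 ≤ p b * g b ^ 2 := mul_nonneg (hp b) (sq_nonneg _)
  have hV0 : 0 ≤ V := (Finset.sum_nonneg fun b _ => hterm b).trans hV
  have hB : ∑ b ∈ B, p b * g b ^ 2 ≤ V :=
    (Finset.sum_le_sum_of_subset_of_nonneg (Finset.subset_univ B) fun b _ _ => hterm b).trans hV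
  rcases hV0.eq_or_lt with hV0 | hVpos
  · have hzero : ∀ b ∈ B, p b = 0 := by
      intro b hb
      have hg : 0 < g b ^ 2 := by
        have := (Finset.mem_filter.mp hb).2
        rw [← hV0, Real.sqrt_zero, mul_zero, abs_pos] at this
        positivity
      have := (Finset.single_le_sum (fun b _ => hterm b) hb).trans (hV0 ▸ hB)
      nlinarith [hp b]
    rw [Finset.sum_eq_zero hzero]
    positivity
  · have hsq : ∀ b ∈ B, δ ^ 2 * V ≤ g b ^ 2 := by
      intro b hb
      have hlt := (Finset.mem_filter.mp hb).2
      calc δ ^ 2 * V = (δ * √V) ^ 2 := by rw [mul_pow, Real.sq_sqrt hV0]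
        _ ≤ |g b| ^ 2 := pow_le_pow_left₀ (by positivity) hlt.le 2
        _ = g b ^ 2 := sq_abs _
    have hmass : (∑ b ∈ B, p b) * (δ ^ 2 * V) ≤ 1 * V := by
      rw [Finset.sum_mul, one_mul]
      exact (Finset.sum_le_sum fun b hb => mul_le_mul_of_nonneg_left (hsq b hb) (hp b)).trans hB
    rw [le_div_iff₀ (by positivity)]
    nlinarith

theorem sum_biUnion_le_sum_sum {β ι : Type*} [DecidableEq β] {p : β → ℝ} (hp : ∀ b, 0 ≤ p b)
    (s : Finset ι) (t : ι → Finset β) :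
    ∑ b ∈ s.biUnion t, p b ≤ ∑ i ∈ s, ∑ b ∈ t i, p b := by
  rw [← Finset.sup_eq_biUnion]
  refine Finset.apply_sup_le_sum (f := fun u => ∑ b ∈ u, p b) Finset.sum_empty
    (fun {u v} => ?_) s
  have := Finset.sum_union_inter (s₁ := u) (s₂ := v) (f := p)
  have : 0 ≤ ∑ b ∈ u ∩ v, p b := Finset.sum_nonneg fun b _ => hp b
  simp only [Finset.sup_eq_union]
  linarith

theorem Kconst_eq_s10 : Kconst = 2 / Real.exp 1 / Real.log 2 := by
  rw [Kconst, Real.logb, Real.log_exp]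
  ring

theorem Kconst_nonneg : 0 ≤ Kconst := by
  rw [Kconst_eq_s10]
  positivity

theorem sqrt_mul_neg_log_le_s10 {t : ℝ} (ht : 0 < t) : √t * -Real.log t ≤ 2 / Real.exp 1 := by
  have hsqrt : √t = (Real.exp (-Real.log t / 2))⁻¹ := by
    rw [← Real.exp_neg, neg_div, neg_neg, Real.exp_half, Real.exp_log ht]
  set u := -Real.log t / 2
  have hu : Real.exp 1 * u / Real.exp u ≤ 1 :=
    div_le_one_of_le₀ Real.exp_one_mul_le_exp (Real.exp_pos u).le
  rw [hsqrt, le_div_iff₀ (Real.exp_pos 1)]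
  calc (Real.exp u)⁻¹ * -Real.log t * Real.exp 1 = 2 * (Real.exp 1 * u / Real.exp u) := by
        simp only [u]; ring
    _ ≤ 2 := by linarith

theorem sqrt_mul_one_sub_mul_abs_logb_le_Kconst_s10 {t : ℝ} (h0 : 0 ≤ t) (h1 : t ≤ 1) :
    √(t * (1 - t)) * |Real.logb 2 t| ≤ Kconst := by
  rcases h0.eq_or_lt with rfl | ht
  · simpa using Kconst_nonneg
  have hlog : 0 ≤ -Real.log t := neg_nonneg.mpr (Real.log_nonpos h0 h1)
  rw [Real.logb, abs_div, abs_of_nonpos (neg_nonneg.mp hlog),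
    abs_of_pos (Real.log_pos one_lt_two), Kconst_eq_s10, ← mul_div_assoc]
  gcongr
  calc √(t * (1 - t)) * -Real.log t ≤ √t * -Real.log t := by
        gcongr
        nlinarith
    _ ≤ 2 / Real.exp 1 := sqrt_mul_neg_log_le_s10 ht

section Exp2

theorem exp2_pos (t : ℝ) : 0 < exp2 t := Real.rpow_pos_of_pos two_pos t

theorem exp2_neg (t : ℝ) : exp2 (-t) = (exp2 t)⁻¹ := Real.rpow_neg zero_le_two t

theorem exp2_le_iff_le_logb {p t : ℝ} (hp : 0 < p) : exp2 t ≤ p ↔ t ≤ Real.logb 2 p :=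
  (Real.le_logb_iff_rpow_le one_lt_two hp).symm

theorem le_exp2_iff_logb_le {p t : ℝ} (hp : 0 < p) : p ≤ exp2 t ↔ Real.logb 2 p ≤ t :=
  (Real.logb_le_iff_le_rpow one_lt_two hp).symm

theorem card_le_exp2_of_exp2_neg_le {β : Type*} {s : Finset β} {p : β → ℝ} {t : ℝ}
    (hp : ∀ b ∈ s, exp2 (-t) ≤ p b) (hsum : ∑ b ∈ s, p b ≤ 1) : (s.card : ℝ) ≤ exp2 t := by
  have h := (Finset.card_nsmul_le_sum s p _ hp).trans hsum
  rwa [nsmul_eq_mul, exp2_neg, ← div_eq_mul_inv, div_le_one (exp2_pos t)] at h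

theorem mul_exp2_le_card_of_le_exp2_neg {β : Type*} {s : Finset β} {p : β → ℝ} {m t : ℝ}
    (hp : ∀ b ∈ s, p b ≤ exp2 (-t)) (hsum : m ≤ ∑ b ∈ s, p b) : m * exp2 t ≤ s.card := by
  have h := hsum.trans (Finset.sum_le_card_nsmul s p _ hp)
  rwa [nsmul_eq_mul, exp2_neg, ← div_eq_mul_inv, le_div_iff₀ (exp2_pos t)] at h

end Exp2

section JointCount

variable {X : Type*} {d n : ℕ}

def jointCount (xs : Fin n → X) (js : Fin n → Fin d) (x : X) (k : Fin d) : ℕ :=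
  (Finset.univ.filter fun i => xs i = x ∧ js i = k).card

theorem sum_prod_filter_jointCount_deviation_le (xs : Fin n → X) {q : X → Fin d → ℝ}
    (hq : ∀ x, IsProbDist (q x)) {δ : ℝ} (hδ : 0 < δ) (x : X) (k : Fin d) :
    ∑ js ∈ Finset.univ.filter (fun js => δ * √(countIn x xs) * √(q x k * (1 - q x k)) <
        |(jointCount xs js x k : ℝ) - countIn x xs * q x k|),
      ∏ i, q (xs i) (js i) ≤ 1 / δ ^ 2 := by
  set I := Finset.univ.filter fun i => xs i = x
  set f : Fin n → Fin d → ℝ := fun i a => (if a = k then 1 else 0) - q (xs i) k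
  have hdev (js : Fin n → Fin d) :
      (jointCount xs js x k : ℝ) - countIn x xs * q x k = ∑ i ∈ I, f i (js i) := by
    rw [jointCount, Finset.sum_sub_distrib, Finset.sum_boole, Finset.filter_filter,
      Finset.sum_congr rfl fun i hi => by rw [(Finset.mem_filter.mp hi).2], Finset.sum_const,
      nsmul_eq_mul]
    rfl
  have hvar : ∑ js : Fin n → Fin d, (∏ i, q (xs i) (js i)) * (∑ i ∈ I, f i (js i)) ^ 2 =
      countIn x xs * (q x k * (1 - q x k)) := by
    rw [sum_prod_mul_sq_sum_of_centered (fun i => (hq (xs i)).2) I f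
      fun i _ => sum_mul_indicator_sub (hq (xs i)).2 k]
    rw [Finset.sum_congr rfl fun i hi => by
      rw [sum_mul_indicator_sub_sq (hq (xs i)).2 k, (Finset.mem_filter.mp hi).2]]
    rw [Finset.sum_const, nsmul_eq_mul]
    rfl
  have hthreshold : δ * √(countIn x xs) * √(q x k * (1 - q x k)) =
      δ * √(countIn x xs * (q x k * (1 - q x k))) := by
    rw [Real.sqrt_mul (Nat.cast_nonneg _), mul_assoc]
  simp_rw [hthreshold, hdev]
  exact sum_filter_mul_sqrt_lt_abs_le_inv_sq
    (fun js => Finset.prod_nonneg fun i _ => (hq (xs i)).1 _) hvar.le hδ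

end JointCount

section TypicalSequences

variable {X : Type*} [Fintype X] {d n : ℕ}

theorem mem_condTypicalSet {xs : Fin n → X} {q : X → Fin d → ℝ} {δ : ℝ} {js : Fin n → Fin d} :
    js ∈ condTypicalSet xs q δ ↔ ∀ x k, |(jointCount xs js x k : ℝ) - countIn x xs * q x k| ≤
      δ * √(countIn x xs) * √(q x k * (1 - q x k)) := by
  simp [condTypicalSet, jointCount]

theorem sum_countIn (xs : Fin n → X) : ∑ x, (countIn x xs : ℝ) = n := by
  rw [← Nat.cast_sum]
  simp only [countIn]
  rw [← Finset.card_eq_sum_card_fiberwise fun i _ => Finset.mem_univ (xs i),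
    Finset.card_univ, Fintype.card_fin]

theorem sum_sqrt_countIn_le (xs : Fin n → X) :
    ∑ x, √(countIn x xs : ℝ) ≤ √(Fintype.card X) * √n := by
  simpa [mul_comm, sum_countIn] using Real.sum_sqrt_mul_sqrt_le Finset.univ
    (fun x => Nat.cast_nonneg (countIn x xs)) (fun _ => zero_le_one)

theorem sum_eq_sum_jointCount_mul (xs : Fin n → X) (js : Fin n → Fin d) (f : X → Fin d → ℝ) :
    ∑ i, f (xs i) (js i) = ∑ x, ∑ k, (jointCount xs js x k : ℝ) * f x k := by
  rw [← Finset.sum_fiberwise Finset.univ (fun i => (xs i, js i)), Fintype.sum_prod_type]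
  refine Finset.sum_congr rfl fun x _ => Finset.sum_congr rfl fun k _ => ?_
  have hfiber : ∀ i ∈ Finset.univ.filter (fun i => (xs i, js i) = (x, k)),
      f (xs i) (js i) = f x k := by
    intro i hi
    obtain ⟨hx, hk⟩ := Prod.mk.inj (Finset.mem_filter.mp hi).2
    rw [hx, hk]
  rw [Finset.sum_congr rfl hfiber, Finset.sum_const, nsmul_eq_mul]
  simp [jointCount]

theorem pos_of_mem_condTypicalSet {xs : Fin n → X} {q : X → Fin d → ℝ}
    (hq : ∀ x, IsProbDist (q x)) {δ : ℝ} {js : Fin n → Fin d}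
    (hjs : js ∈ condTypicalSet xs q δ) (i : Fin n) : 0 < q (xs i) (js i) := by
  refine ((hq (xs i)).1 (js i)).lt_of_ne fun hzero => ?_
  have hbound := mem_condTypicalSet.mp hjs (xs i) (js i)
  rw [← hzero] at hbound
  have hcard : 0 < jointCount xs js (xs i) (js i) := Finset.card_pos.mpr ⟨i, by simp⟩
  simp only [mul_zero, sub_zero, zero_mul, Real.sqrt_zero, Nat.abs_cast] at hbound
  exact absurd hbound (by exact_mod_cast hcard.not_ge)

theorem abs_logb_prod_add_sum_countIn_mul_shannonEntropy_le {xs : Fin n → X}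
    {q : X → Fin d → ℝ} (hq : ∀ x, IsProbDist (q x)) {δ : ℝ} (hδ : 0 ≤ δ)
    {js : Fin n → Fin d} (hjs : js ∈ condTypicalSet xs q δ) :
    |Real.logb 2 (∏ i, q (xs i) (js i)) + ∑ x, countIn x xs * shannonEntropy (q x)|
      ≤ Kconst * d * √(Fintype.card X) * δ * √n := by
  set N : X → Fin d → ℝ := fun x k => jointCount xs js x k
  have hq1 (x : X) (k : Fin d) : q x k ≤ 1 :=
    (hq x).2 ▸ Finset.single_le_sum (fun j _ => (hq x).1 j) (Finset.mem_univ k)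
  have hsplit : Real.logb 2 (∏ i, q (xs i) (js i)) + ∑ x, countIn x xs * shannonEntropy (q x) =
      ∑ x, ∑ k, (N x k - countIn x xs * q x k) * Real.logb 2 (q x k) := by
    rw [Real.logb_prod _ _ fun i _ => (pos_of_mem_condTypicalSet hq hjs i).ne',
      sum_eq_sum_jointCount_mul xs js fun x k => Real.logb 2 (q x k)]
    simp only [shannonEntropy, Finset.mul_sum, mul_neg, Finset.sum_neg_distrib, ← sub_eq_add_neg,
      ← Finset.sum_sub_distrib, sub_mul, mul_assoc, N]
  have hterm (x : X) (k : Fin d) :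
      |(N x k - countIn x xs * q x k) * Real.logb 2 (q x k)| ≤ δ * √(countIn x xs) * Kconst := by
    rw [abs_mul]
    calc |N x k - countIn x xs * q x k| * |Real.logb 2 (q x k)|
        ≤ δ * √(countIn x xs) * √(q x k * (1 - q x k)) * |Real.logb 2 (q x k)| := by
          gcongr
          exact mem_condTypicalSet.mp hjs x k
      _ = δ * √(countIn x xs) * (√(q x k * (1 - q x k)) * |Real.logb 2 (q x k)|) := by ring
      _ ≤ δ * √(countIn x xs) * Kconst := by
          gcongr
          exact sqrt_mul_one_sub_mul_abs_logb_le_Kconst_s10 ((hq x).1 k) (hq1 x k)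
  rw [hsplit]
  calc |∑ x, ∑ k, (N x k - countIn x xs * q x k) * Real.logb 2 (q x k)|
      ≤ ∑ x, ∑ k : Fin d, δ * √(countIn x xs) * Kconst :=
        (Finset.abs_sum_le_sum_abs _ _).trans <| Finset.sum_le_sum fun x _ =>
          (Finset.abs_sum_le_sum_abs _ _).trans <| Finset.sum_le_sum fun k _ => hterm x k
    _ = Kconst * d * δ * ∑ x, √(countIn x xs) := by
        simp only [Finset.sum_const, Finset.card_univ, Fintype.card_fin, nsmul_eq_mul,
          Finset.mul_sum]
        exact Finset.sum_congr rfl fun x _ => by ring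
    _ ≤ Kconst * d * δ * (√(Fintype.card X) * √n) := by
        have := Kconst_nonneg
        gcongr
        exact sum_sqrt_countIn_le xs
    _ = Kconst * d * √(Fintype.card X) * δ * √n := by ring

theorem one_sub_le_sum_prod_condTypicalSet (xs : Fin n → X) {q : X → Fin d → ℝ}
    (hq : ∀ x, IsProbDist (q x)) {δ : ℝ} (hδ : 0 < δ) :
    1 - Fintype.card X * d / δ ^ 2 ≤ ∑ js ∈ condTypicalSet xs q δ, ∏ i, q (xs i) (js i) := by
  set T := condTypicalSet xs q δ
  set p : (Fin n → Fin d) → ℝ := fun js => ∏ i, q (xs i) (js i)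
  set bad : X × Fin d → Finset (Fin n → Fin d) := fun xk => Finset.univ.filter fun js =>
    δ * √(countIn xk.1 xs) * √(q xk.1 xk.2 * (1 - q xk.1 xk.2)) <
      |(jointCount xs js xk.1 xk.2 : ℝ) - countIn xk.1 xs * q xk.1 xk.2|
  have hp (js : Fin n → Fin d) : 0 ≤ p js := Finset.prod_nonneg fun i _ => (hq (xs i)).1 _
  have htotal : ∑ js, p js = 1 := sum_prod_eq_one_s10 fun i => (hq (xs i)).2
  have hcover : Finset.univ \ T ⊆ Finset.univ.biUnion bad := by
    intro js hjs
    simpa [T, bad, mem_condTypicalSet] using hjs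
  have hcompl : ∑ js ∈ Finset.univ \ T, p js ≤ Fintype.card X * d / δ ^ 2 :=
    calc ∑ js ∈ Finset.univ \ T, p js
        ≤ ∑ js ∈ Finset.univ.biUnion bad, p js :=
          Finset.sum_le_sum_of_subset_of_nonneg hcover fun js _ _ => hp js
      _ ≤ ∑ xk : X × Fin d, ∑ js ∈ bad xk, p js := sum_biUnion_le_sum_sum hp _ _
      _ ≤ ∑ _xk : X × Fin d, 1 / δ ^ 2 :=
          Finset.sum_le_sum fun xk _ => sum_prod_filter_jointCount_deviation_le xs hq hδ xk.1 xk.2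
      _ = Fintype.card X * d / δ ^ 2 := by simp [div_eq_mul_inv, mul_assoc]
  have hsplit := Finset.sum_sdiff (Finset.subset_univ T) (f := p)
  linarith

end TypicalSequences

section ConditionalTypicalProjector

variable {X : Type*} [Fintype X] {d n : ℕ} {xs : Fin n → X} {q : X → Fin d → ℝ}

theorem exp2_le_prod_le_exp2_of_mem_condTypicalSet (hq : ∀ x, IsProbDist (q x)) {δ : ℝ}
    (hδ : 0 ≤ δ) {js : Fin n → Fin d} (hjs : js ∈ condTypicalSet xs q δ) :
    exp2 (-(∑ x, countIn x xs * shannonEntropy (q x)) -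
        Kconst * d * √(Fintype.card X) * δ * √n) ≤ ∏ i, q (xs i) (js i) ∧
      ∏ i, q (xs i) (js i) ≤ exp2 (-(∑ x, countIn x xs * shannonEntropy (q x)) +
        Kconst * d * √(Fintype.card X) * δ * √n) := by
  have hpos := Finset.prod_pos (s := Finset.univ) fun i _ => pos_of_mem_condTypicalSet hq hjs i
  have h := abs_le.mp (abs_logb_prod_add_sum_countIn_mul_shannonEntropy_le hq hδ hjs)
  rw [exp2_le_iff_le_logb hpos, le_exp2_iff_logb_le hpos]
  constructor <;> linarith [h.1, h.2]

theorem sum_countIn_mul_shannonEntropy_eq {P : X → ℝ} {W : X → Mat d} {π : X → Fin d → Mat d}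
    (hdiag : ∀ x, IsDiagonalization (W x) (q x) (π x))
    (htype : ∀ x, (countIn x xs : ℝ) = n * P x) :
    ∑ x, countIn x xs * shannonEntropy (q x) = n * condEntropy P W := by
  simp only [condEntropy, Finset.mul_sum, htype, vnEntropy_eq_shannonEntropy (hdiag _), mul_assoc]

variable {π : X → Fin d → Mat d}

theorem trace_condTypicalProj (htr : ∀ x j, (π x j).trace = 1) (δ : ℝ) :
    (condTypicalProj xs q π δ).trace = (condTypicalSet xs q δ).card := by
  simp [condTypicalProj, Matrix.trace_sum, trace_tensorPow, htr]

theorem condTypicalProj_mul_tensorPow_mul_condTypicalProj {W : X → Mat d}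
    (hdiag : ∀ x, IsDiagonalization (W x) (q x) (π x)) (δ : ℝ) :
    condTypicalProj xs q π δ * tensorPow (fun i => W (xs i)) * condTypicalProj xs q π δ =
      ∑ js ∈ condTypicalSet xs q δ,
        ((∏ i, q (xs i) (js i) : ℝ) : ℂ) • tensorPow fun i => π (xs i) (js i) := by
  have horth := tensorPow_mul_tensorPow_of_orthogonal (F := fun i => π (xs i))
    fun i => (hdiag (xs i)).mul_eq_ite
  have hWx (x : X) : W x = ∑ j, (q x j : ℂ) • π x j := (hdiag x).2.2.2.2.2.1
  have hW : tensorPow (fun i => W (xs i)) = ∑ js : Fin n → Fin d,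
      ((∏ i, q (xs i) (js i) : ℝ) : ℂ) • tensorPow fun i => π (xs i) (js i) := by
    simp only [hWx, tensorPow_sum_smul, Complex.ofReal_prod]
  have hproj : condTypicalProj xs q π δ = ∑ js ∈ condTypicalSet xs q δ,
      (1 : ℂ) • tensorPow fun i => π (xs i) (js i) := by
    simp [condTypicalProj]
  rw [hproj, hW, sum_smul_mul_sum_smul horth, sum_smul_mul_sum_smul horth]
  simp

theorem posSemidef_condTypicalProj_mul_tensorPow_mul_condTypicalProj_sub {W : X → Mat d}
    (hdiag : ∀ x, IsDiagonalization (W x) (q x) (π x)) {δ c : ℝ}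
    (hc : ∀ js ∈ condTypicalSet xs q δ, c ≤ ∏ i, q (xs i) (js i)) :
    (condTypicalProj xs q π δ * tensorPow (fun i => W (xs i)) * condTypicalProj xs q π δ -
      (c : ℂ) • condTypicalProj xs q π δ).PosSemidef := by
  rw [condTypicalProj_mul_tensorPow_mul_condTypicalProj hdiag, condTypicalProj, Finset.smul_sum,
    ← Finset.sum_sub_distrib]
  simp_rw [← sub_smul, ← Complex.ofReal_sub]
  exact posSemidef_sum_smul_tensorPow (F := fun i => π (xs i)) (fun i j => ((hdiag (xs i)).1 j).1)
    (fun i j => (hdiag (xs i)).2.1 j) fun js hjs => sub_nonneg.mpr (hc js hjs)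

theorem posSemidef_sub_condTypicalProj_mul_tensorPow_mul_condTypicalProj {W : X → Mat d}
    (hdiag : ∀ x, IsDiagonalization (W x) (q x) (π x)) {δ c : ℝ}
    (hc : ∀ js ∈ condTypicalSet xs q δ, ∏ i, q (xs i) (js i) ≤ c) :
    ((c : ℂ) • condTypicalProj xs q π δ - condTypicalProj xs q π δ * tensorPow (fun i => W (xs i)) *
      condTypicalProj xs q π δ).PosSemidef := by
  rw [condTypicalProj_mul_tensorPow_mul_condTypicalProj hdiag, condTypicalProj, Finset.smul_sum,
    ← Finset.sum_sub_distrib]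
  simp_rw [← sub_smul, ← Complex.ofReal_sub]
  exact posSemidef_sum_smul_tensorPow (F := fun i => π (xs i)) (fun i j => ((hdiag (xs i)).1 j).1)
    (fun i j => (hdiag (xs i)).2.1 j) fun js hjs => sub_nonneg.mpr (hc js hjs)

end ConditionalTypicalProjector

theorem condTypicalProj_sandwich_and_trace_general {X : Type} [Fintype X] {d : ℕ}
    (W : X → Mat d)
    (q : X → Fin d → ℝ) (π : X → Fin d → Mat d)
    (hdiag : ∀ x, IsDiagonalization (W x) (q x) (π x))
    (n : ℕ) (xs : Fin n → X) (P : X → ℝ)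
    (htype : ∀ x, (countIn x xs : ℝ) = n * P x)
    (δ : ℝ) (hδ : 0 ≤ δ) :
    (condTypicalProj xs q π δ * tensorPow (fun i => W (xs i)) * condTypicalProj xs q π δ -
        ((exp2 (-((n : ℝ) * condEntropy P W) -
            Kconst * d * Real.sqrt (Fintype.card X) * δ * Real.sqrt n) : ℝ) : ℂ) •
          condTypicalProj xs q π δ).PosSemidef ∧
      (((exp2 (-((n : ℝ) * condEntropy P W) +
            Kconst * d * Real.sqrt (Fintype.card X) * δ * Real.sqrt n) : ℝ) : ℂ) •
          condTypicalProj xs q π δ -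
        condTypicalProj xs q π δ * tensorPow (fun i => W (xs i)) *
          condTypicalProj xs q π δ).PosSemidef ∧
      (Matrix.trace (condTypicalProj xs q π δ)).re
        ≤ exp2 ((n : ℝ) * condEntropy P W +
            Kconst * d * Real.sqrt (Fintype.card X) * δ * Real.sqrt n) ∧
      (0 < δ →
        (1 - (Fintype.card X : ℝ) * d / δ ^ 2) *
            exp2 ((n : ℝ) * condEntropy P W -
              Kconst * d * Real.sqrt (Fintype.card X) * δ * Real.sqrt n)
          ≤ (Matrix.trace (condTypicalProj xs q π δ)).re) := by
  have hq (x : X) : IsProbDist (q x) := (hdiag x).2.2.2.2.2.2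
  have hbounds (js : Fin n → Fin d) (hjs : js ∈ condTypicalSet xs q δ) :=
    sum_countIn_mul_shannonEntropy_eq hdiag htype ▸
      exp2_le_prod_le_exp2_of_mem_condTypicalSet hq hδ hjs
  have htrace : (Matrix.trace (condTypicalProj xs q π δ)).re = (condTypicalSet xs q δ).card := by
    simp [trace_condTypicalProj fun x => (hdiag x).2.2.1]
  refine ⟨posSemidef_condTypicalProj_mul_tensorPow_mul_condTypicalProj_sub hdiag
      fun js hjs => (hbounds js hjs).1,
    posSemidef_sub_condTypicalProj_mul_tensorPow_mul_condTypicalProj hdiag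
      fun js hjs => (hbounds js hjs).2, ?_, fun hδpos => ?_⟩
  · rw [htrace]
    refine card_le_exp2_of_exp2_neg_le (fun js hjs => ?_)
      (sum_prod_le_one (fun i => (hq (xs i)).1) (fun i => (hq (xs i)).2) _)
    convert (hbounds js hjs).1 using 2
    ring
  · rw [htrace]
    refine mul_exp2_le_card_of_le_exp2_neg (fun js hjs => ?_)
      (one_sub_le_sum_prod_condTypicalSet xs hq hδpos)
    convert (hbounds js hjs).2 using 2
    ring

/-- **Lemma 4, parts 2–3 (Conditional typical projector, sandwich and trace bounds).**
For `x^n` of type `P`, writing `Π^n = Π^n_{W,δ}(x^n)`: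
`Π^n exp₂(−nH(W|P) − Kd√a δ√n) ≤ Π^n W_{x^n} Π^n ≤ Π^n exp₂(−nH(W|P) + Kd√a δ√n)`,
`Tr Π^n ≤ exp₂(nH(W|P) + Kd√a δ√n)`, and for `δ > 0` also
`Tr Π^n ≥ (1 − ad/δ²) exp₂(nH(W|P) − Kd√a δ√n)`, with `K = 2 log₂(e)/e`. -/
theorem condTypicalProj_sandwich_and_trace {X : Type} [Fintype X] {d : ℕ}
    (W : X → Mat d) (hW : ∀ x, IsState (W x))
    (q : X → Fin d → ℝ) (π : X → Fin d → Mat d)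
    (hdiag : ∀ x, IsDiagonalization (W x) (q x) (π x))
    (n : ℕ) (hn : 0 < n) (xs : Fin n → X) (P : X → ℝ) (hP : IsProbDist P)
    (htype : ∀ x, (countIn x xs : ℝ) = n * P x)
    (δ : ℝ) (hδ : 0 ≤ δ) :
    (condTypicalProj xs q π δ * tensorPow (fun i => W (xs i)) * condTypicalProj xs q π δ -
        ((exp2 (-((n : ℝ) * condEntropy P W) -
            Kconst * d * Real.sqrt (Fintype.card X) * δ * Real.sqrt n) : ℝ) : ℂ) •
          condTypicalProj xs q π δ).PosSemidef ∧
      (((exp2 (-((n : ℝ) * condEntropy P W) +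
            Kconst * d * Real.sqrt (Fintype.card X) * δ * Real.sqrt n) : ℝ) : ℂ) •
          condTypicalProj xs q π δ -
        condTypicalProj xs q π δ * tensorPow (fun i => W (xs i)) *
          condTypicalProj xs q π δ).PosSemidef ∧
      (Matrix.trace (condTypicalProj xs q π δ)).re
        ≤ exp2 ((n : ℝ) * condEntropy P W +
            Kconst * d * Real.sqrt (Fintype.card X) * δ * Real.sqrt n) ∧
      (0 < δ →
        (1 - (Fintype.card X : ℝ) * d / δ ^ 2) *
            exp2 ((n : ℝ) * condEntropy P W -
              Kconst * d * Real.sqrt (Fintype.card X) * δ * Real.sqrt n)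
          ≤ (Matrix.trace (condTypicalProj xs q π δ)).re) :=
  condTypicalProj_sandwich_and_trace_general W q π hdiag n xs P htype δ hδ
end
end
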